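/- Suppose sprank(A^S) = n. Then spcospark(A^S) = m − max over all W ⊆ {1,…,n} with |W| = n−1 of max{|F| : X_W ⊆ F ⊆ {1,…,m} and sprank(A^S_F) ≤ n − 1}. -/

import Mathlib

open Matrix MeasureTheory

/-- `A` has sparsity pattern `S`: the nonzero entries of `A` are exactly those indexed by `S`. -/
def HasPattern {m n : ℕ} (S : Finset (Fin m × Fin n)) (A : Matrix (Fin m) (Fin n) ℝ) : Prop :=
  ∀ i j, A i j ≠ 0 ↔ (i, j) ∈ S

/-- Generic rank of the class of matrices with sparsity pattern `S`. -/
noncomputable def sprank {m n : ℕ} (S : Finset (Fin m × Fin n)) : ℕ :=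
  sSup {r : ℕ | ∃ A : Matrix (Fin m) (Fin n) ℝ, HasPattern S A ∧ A.rank = r}

/-- The sparsity pattern restricted to the rows in `T` (rows outside `T` become zero). -/
def patternOn {m n : ℕ} (S : Finset (Fin m × Fin n)) (T : Finset (Fin m)) :
    Finset (Fin m × Fin n) :=
  S.filter (fun p => p.1 ∈ T)

/-- A matching of a sparsity pattern: any two distinct pairs differ in both coordinates. -/
def IsMatching {m n : ℕ} (M : Finset (Fin m × Fin n)) : Prop :=
  ∀ p ∈ M, ∀ q ∈ M, p ≠ q → p.1 ≠ q.1 ∧ p.2 ≠ q.2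

/-- `nu S` : maximum cardinality of a matching contained in `S`. -/
noncomputable def nu {m n : ℕ} (S : Finset (Fin m × Fin n)) : ℕ :=
  sSup {k : ℕ | ∃ M ⊆ S, IsMatching M ∧ M.card = k}

/-- ℓ₀ "norm": number of nonzero entries of a vector. -/
noncomputable def l0 {m : ℕ} (y : Fin m → ℝ) : ℕ :=
  (Finset.univ.filter (fun i => y i ≠ 0)).card

/-- `cospark A` : minimum of `‖A x‖₀` over nonzero `x`. -/
noncomputable def cospark {m n : ℕ} (A : Matrix (Fin m) (Fin n) ℝ) : ℕ :=
  sInf {k : ℕ | ∃ x : Fin n → ℝ, x ≠ 0 ∧ l0 (A.mulVec x) = k}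

/-- Generic cospark of the class of matrices with sparsity pattern `S`. -/
noncomputable def spcospark {m n : ℕ} (S : Finset (Fin m × Fin n)) : ℕ :=
  sSup {k : ℕ | ∃ A : Matrix (Fin m) (Fin n) ℝ, HasPattern S A ∧ cospark A = k}

/-- The row-submatrix `A_T`, realized as `A` with the rows outside `T` zeroed out. -/
noncomputable def rowRestrict {m n : ℕ} (A : Matrix (Fin m) (Fin n) ℝ) (T : Finset (Fin m)) :
    Matrix (Fin m) (Fin n) ℝ :=
  Matrix.of fun i j => if i ∈ T then A i j else 0

/-- `X_W` : the rows of the pattern `S` all of whose nonzero positions lie in the columns `W`. -/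
def rowsIn {m n : ℕ} (S : Finset (Fin m × Fin n)) (W : Finset (Fin n)) : Finset (Fin m) :=
  Finset.univ.filter (fun i => ∀ j, (i, j) ∈ S → j ∈ W)

section Stmt15AuxSection

namespace Stmt15Aux
open Matrix Finset

lemma exists_kernel_of_rank_lt {p q : ℕ} (A : Matrix (Fin p) (Fin q) ℝ) (h : A.rank < q) :
    ∃ x : Fin q → ℝ, x ≠ 0 ∧ A.mulVec x = 0 := by
  have hrn := LinearMap.finrank_range_add_finrank_ker A.mulVecLin
  rw [Module.finrank_pi, Fintype.card_fin] at hrn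
  have hrank : A.rank = Module.finrank ℝ (LinearMap.range A.mulVecLin) := rfl
  have hker : 0 < Module.finrank ℝ (LinearMap.ker A.mulVecLin) := by omega
  have : Nontrivial (LinearMap.ker A.mulVecLin) := Module.finrank_pos_iff.mp hker
  obtain ⟨y, hy⟩ := exists_ne (0 : LinearMap.ker A.mulVecLin)
  refine ⟨(y : Fin q → ℝ), ?_, ?_⟩
  · simpa [Submodule.coe_eq_zero] using hy
  · have := y.2
    rwa [LinearMap.mem_ker, Matrix.mulVecLin_apply] at this

lemma rank_lt_of_kernel {p q : ℕ} (A : Matrix (Fin p) (Fin q) ℝ) (x : Fin q → ℝ)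
    (hx : x ≠ 0) (h : A.mulVec x = 0) : A.rank < q := by
  have hrn := LinearMap.finrank_range_add_finrank_ker A.mulVecLin
  rw [Module.finrank_pi, Fintype.card_fin] at hrn
  have hrank : A.rank = Module.finrank ℝ (LinearMap.range A.mulVecLin) := rfl
  have hmem : x ∈ LinearMap.ker A.mulVecLin := by
    rw [LinearMap.mem_ker, Matrix.mulVecLin_apply]; exact h
  have : Nontrivial (LinearMap.ker A.mulVecLin) :=
    ⟨⟨⟨x, hmem⟩, 0, by simp [Subtype.ext_iff, hx]⟩⟩
  have hker : 0 < Module.finrank ℝ (LinearMap.ker A.mulVecLin) := Module.finrank_pos_iff.mpr this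
  omega

/-- if all nonzero entries lie in rows `R`, the rank is at most `R.card` -/
lemma rank_le_rows {p q : ℕ} (A : Matrix (Fin p) (Fin q) ℝ) (R : Finset (Fin p))
    (h : ∀ i j, A i j ≠ 0 → i ∈ R) : A.rank ≤ R.card := by
  classical
  rw [Matrix.rank_eq_finrank_span_row]
  have hsub : Submodule.span ℝ (Set.range A) ≤ Submodule.span ℝ ((R.image (fun i => A i) : Finset (Fin q → ℝ)) : Set (Fin q → ℝ)) := by
    rw [Submodule.span_le]
    rintro v ⟨i, rfl⟩
    by_cases hi : i ∈ R
    · exact Submodule.subset_span (by simp only [coe_image, Set.mem_image, mem_coe]; exact ⟨i, hi, rfl⟩)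
    · have : A i = 0 := by
        funext j
        by_contra hij
        exact hi (h i j hij)
      rw [this]
      exact Submodule.zero_mem _
  calc Module.finrank ℝ (Submodule.span ℝ (Set.range A))
      ≤ Module.finrank ℝ (Submodule.span ℝ ((R.image (fun i => A i) : Finset (Fin q → ℝ)) : Set (Fin q → ℝ))) :=
        Submodule.finrank_mono hsub
    _ ≤ (R.image (fun i => A i)).card := finrank_span_finset_le_card _
    _ ≤ R.card := Finset.card_image_le

/-- if all nonzero entries lie in columns `C`, the rank is at most `C.card` -/
lemma rank_le_cols {p q : ℕ} (A : Matrix (Fin p) (Fin q) ℝ) (C : Finset (Fin q))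
    (h : ∀ i j, A i j ≠ 0 → j ∈ C) : A.rank ≤ C.card := by
  classical
  rw [Matrix.rank_eq_finrank_span_cols]
  have hsub : Submodule.span ℝ (Set.range Aᵀ) ≤ Submodule.span ℝ ((C.image (fun j => Aᵀ j) : Finset (Fin p → ℝ)) : Set (Fin p → ℝ)) := by
    rw [Submodule.span_le]
    rintro v ⟨j, rfl⟩
    by_cases hj : j ∈ C
    · exact Submodule.subset_span (by simp only [coe_image, Set.mem_image, mem_coe]; exact ⟨j, hj, rfl⟩)
    · have : Aᵀ j = 0 := by
        funext i
        by_contra hij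
        exact hj (h i j hij)
      rw [this]
      exact Submodule.zero_mem _
  calc Module.finrank ℝ (Submodule.span ℝ (Set.range Aᵀ))
      ≤ Module.finrank ℝ (Submodule.span ℝ ((C.image (fun j => Aᵀ j) : Finset (Fin p → ℝ)) : Set (Fin p → ℝ))) :=
        Submodule.finrank_mono hsub
    _ ≤ (C.image (fun j => Aᵀ j)).card := finrank_span_finset_le_card _
    _ ≤ C.card := Finset.card_image_le

lemma rank_add_le {p q : ℕ} (A B : Matrix (Fin p) (Fin q) ℝ) :
    (A + B).rank ≤ A.rank + B.rank := by
  have hle : LinearMap.range (A + B).mulVecLin ≤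
      LinearMap.range A.mulVecLin ⊔ LinearMap.range B.mulVecLin := by
    rintro y ⟨x, rfl⟩
    rw [Matrix.mulVecLin_add]
    exact Submodule.add_mem_sup ⟨x, rfl⟩ ⟨x, rfl⟩
  calc (A + B).rank ≤ Module.finrank ℝ ↥(LinearMap.range A.mulVecLin ⊔ LinearMap.range B.mulVecLin) :=
        Submodule.finrank_mono hle
    _ ≤ A.rank + B.rank := Submodule.finrank_add_le_finrank_add_finrank _ _

/-- vertex-cover bound on the rank -/
lemma rank_le_cover {p q : ℕ} (A : Matrix (Fin p) (Fin q) ℝ) (R : Finset (Fin p))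
    (C : Finset (Fin q)) (h : ∀ i j, A i j ≠ 0 → i ∈ R ∨ j ∈ C) :
    A.rank ≤ R.card + C.card := by
  classical
  set A₁ : Matrix (Fin p) (Fin q) ℝ := Matrix.of fun i j => if i ∈ R then A i j else 0 with hA₁
  set A₂ : Matrix (Fin p) (Fin q) ℝ := Matrix.of fun i j => if i ∈ R then 0 else A i j with hA₂
  have hsum : A = A₁ + A₂ := by
    ext i j
    by_cases hi : i ∈ R <;> simp [hA₁, hA₂, hi]
  have h1 : A₁.rank ≤ R.card := by
    apply rank_le_rows
    intro i j hij
    by_contra hi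
    simp [hA₁, hi] at hij
  have h2 : A₂.rank ≤ C.card := by
    apply rank_le_cols
    intro i j hij
    by_cases hi : i ∈ R
    · simp [hA₂, hi] at hij
    · simp only [hA₂, Matrix.of_apply, if_neg hi] at hij
      rcases h i j hij with h' | h'
      · exact absurd h' hi
      · exact h'
  calc A.rank = (A₁ + A₂).rank := by rw [← hsum]
    _ ≤ A₁.rank + A₂.rank := rank_add_le _ _
    _ ≤ R.card + C.card := Nat.add_le_add h1 h2

lemma exists_linIndep_cols {p q : ℕ} (M : Matrix (Fin p) (Fin q) ℝ) :
    ∃ g : Fin M.rank → Fin q, LinearIndependent ℝ (fun k => Mᵀ (g k)) := by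
  classical
  obtain ⟨b, hbsub, hbspan, hbli⟩ := exists_linearIndependent ℝ (Set.range Mᵀ)
  have hbfin : b.Finite := (Set.finite_range Mᵀ).subset hbsub
  haveI : Fintype b := hbfin.fintype
  have hcard : Fintype.card b = M.rank := by
    rw [Matrix.rank_eq_finrank_span_cols, Matrix.col, ← hbspan, finrank_span_set_eq_card hbli,
      Set.toFinset_card]
  let e : Fin M.rank ≃ b := (Fintype.equivFinOfCardEq hcard).symm
  have hmem : ∀ k : Fin M.rank, ((e k : Fin p → ℝ)) ∈ Set.range Mᵀ := fun k => hbsub (e k).2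
  choose g hg using hmem
  refine ⟨g, ?_⟩
  have : (fun k => Mᵀ (g k)) = (Subtype.val ∘ e) := by
    funext k
    exact hg k
  rw [this]
  exact hbli.comp e e.injective

lemma le_rank_of_submatrix_det {p q r : ℕ} (A : Matrix (Fin p) (Fin q) ℝ)
    (f : Fin r → Fin p) (g : Fin r → Fin q) (h : (A.submatrix f g).det ≠ 0) : r ≤ A.rank := by
  have h1 : (A.submatrix f g).rank = r := by
    rw [Matrix.rank_of_isUnit _ ((Matrix.isUnit_iff_isUnit_det _).mpr (isUnit_iff_ne_zero.mpr h)),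
      Fintype.card_fin]
  calc r = (A.submatrix f g).rank := h1.symm
    _ ≤ A.rank := by
        classical
        set P : Matrix (Fin r) (Fin p) ℝ := Matrix.of fun k i => if f k = i then 1 else 0 with hP
        set Q : Matrix (Fin q) (Fin r) ℝ := Matrix.of fun j l => if g l = j then 1 else 0 with hQ
        have hPA : P * A = A.submatrix f id := by
          ext k j
          simp only [mul_apply, hP, Matrix.of_apply, ite_mul, one_mul, zero_mul,
            submatrix_apply, id]
          rw [Finset.sum_ite_eq Finset.univ (f k) (fun i => A i j)]
          simp
        have hfull : A.submatrix f g = (P * A) * Q := by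
          rw [hPA]
          ext k l
          simp only [mul_apply, hQ, Matrix.of_apply, submatrix_apply, id, mul_ite, mul_one,
            mul_zero]
          rw [Finset.sum_ite_eq Finset.univ (g l) (fun j => A (f k) j)]
          simp
        calc (A.submatrix f g).rank = ((P * A) * Q).rank := by rw [hfull]
          _ ≤ (P * A).rank := rank_mul_le_left _ _
          _ ≤ A.rank := rank_mul_le_right _ _

lemma exists_det_ne_zero {p q : ℕ} (B : Matrix (Fin p) (Fin q) ℝ) :
    ∃ (f : Fin B.rank → Fin p) (g : Fin B.rank → Fin q), (B.submatrix f g).det ≠ 0 := by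
  classical
  -- step 1 : pick B.rank linearly independent rows
  obtain ⟨f₀, hf₀⟩ := exists_linIndep_cols Bᵀ
  have hBt : Bᵀ.rank = B.rank := Matrix.rank_transpose B
  set f : Fin B.rank → Fin p := fun k => f₀ (Fin.cast hBt.symm k) with hf
  have hfli : LinearIndependent ℝ (fun k => B (f k)) := by
    have := hf₀.comp (Fin.cast hBt.symm) (Fin.cast_injective _)
    exact this
  set B₁ : Matrix (Fin B.rank) (Fin q) ℝ := B.submatrix f id with hB₁
  have hr₁ : B₁.rank = B.rank := by
    rw [Matrix.rank_eq_finrank_span_row, Matrix.row]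
    have hrange : Set.range (B₁ : Fin B.rank → Fin q → ℝ) = Set.range (fun k => B (f k)) := rfl
    rw [hrange, finrank_span_eq_card hfli, Fintype.card_fin]
  -- step 2 : pick B.rank linearly independent columns of B₁
  obtain ⟨g₀, hg₀⟩ := exists_linIndep_cols B₁
  set g : Fin B.rank → Fin q := fun k => g₀ (Fin.cast hr₁.symm k) with hg
  have hgli : LinearIndependent ℝ (fun k => B₁ᵀ (g k)) := by
    have := hg₀.comp (Fin.cast hr₁.symm) (Fin.cast_injective _)
    exact this
  refine ⟨f, g, ?_⟩
  have hsub : B.submatrix f g = B₁.submatrix id g := by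
    rw [hB₁, Matrix.submatrix_submatrix]
    rfl
  rw [hsub]
  intro hdet
  obtain ⟨v, hv, hmv⟩ := Matrix.exists_mulVec_eq_zero_iff.mpr hdet
  have hsum : ∑ k, v k • (B₁.submatrix id g)ᵀ k = 0 := by
    funext i
    have := congrFun hmv i
    simp only [Matrix.mulVec, dotProduct] at this
    simpa [Finset.sum_apply, Matrix.transpose_apply, mul_comm] using this
  have hli2 : LinearIndependent ℝ (fun k => (B₁.submatrix id g)ᵀ k) := by
    have : (fun k => (B₁.submatrix id g)ᵀ k) = fun k => B₁ᵀ (g k) := by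
      funext k; rfl
    rw [this]; exact hgli
  have := Fintype.linearIndependent_iff.mp hli2 v hsum
  exact hv (funext this)

lemma exists_algIndep_fin : ∀ k : ℕ, ∃ v : Fin k → ℝ, AlgebraicIndependent ℚ v := by
  intro k
  induction k with
  | zero =>
      refine ⟨Fin.elim0, ?_⟩
      rw [algebraicIndependent_empty_type_iff]
      exact (algebraMap ℚ ℝ).injective
  | succ k ih =>
      obtain ⟨v, hv⟩ := ih
      -- the subalgebra generated by the range of `v` is countable
      have hcnt : Countable (Algebra.adjoin ℚ (Set.range v)) := by
        have hMv : Countable (MvPolynomial (Fin k) ℚ) := by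
          unfold MvPolynomial
          exact Function.Surjective.countable (f := AddMonoidAlgebra.ofCoeff) (fun p => ⟨p.coeff, rfl⟩)
        have hsurj : Function.Surjective
            (fun pq : MvPolynomial (Fin k) ℚ =>
              (⟨MvPolynomial.aeval v pq, by
                rw [Algebra.adjoin_range_eq_range_aeval]
                exact ⟨pq, rfl⟩⟩ : Algebra.adjoin ℚ (Set.range v))) := by
          rintro ⟨x, hx⟩
          rw [Algebra.adjoin_range_eq_range_aeval] at hx
          obtain ⟨pq, hpq⟩ := hx
          exact ⟨pq, Subtype.ext hpq⟩
        exact hsurj.countable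
      haveI := hcnt
      haveI : NoZeroSMulDivisors (Algebra.adjoin ℚ (Set.range v)) ℝ :=
        ⟨fun {c x} h => by
          rw [Subalgebra.smul_def] at h
          rcases mul_eq_zero.mp h with h | h
          · exact Or.inl (Subtype.ext h)
          · exact Or.inr h⟩
      have halg : {x : ℝ | IsAlgebraic (Algebra.adjoin ℚ (Set.range v)) x}.Countable :=
        Algebraic.countable _ _
      obtain ⟨a, ha⟩ : ∃ a : ℝ, Transcendental (Algebra.adjoin ℚ (Set.range v)) a := by
        by_contra hcon
        push_neg at hcon
        have huniv : {x : ℝ | IsAlgebraic (Algebra.adjoin ℚ (Set.range v)) x} = Set.univ := by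
          ext x
          simp only [Set.mem_setOf_eq, Set.mem_univ, iff_true]
          have := hcon x
          rwa [Transcendental, not_not] at this
        rw [huniv] at halg
        exact Cardinal.not_countable_real halg
      have h2 := (hv.option_iff_transcendental a).mpr ha
      exact ⟨_, h2.comp (finSuccEquiv k) (finSuccEquiv k).injective⟩

lemma exists_algIndep (m n : ℕ) : ∃ v : Fin m × Fin n → ℝ, AlgebraicIndependent ℚ v := by
  obtain ⟨v, hv⟩ := exists_algIndep_fin (m * n)
  exact ⟨v ∘ finProdFinEquiv, hv.comp finProdFinEquiv finProdFinEquiv.injective⟩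

lemma algIndep_ne_zero {ι : Type*} {v : ι → ℝ} (hv : AlgebraicIndependent ℚ v) (p : ι) :
    v p ≠ 0 := by
  intro h0
  have hinj := algebraicIndependent_iff_injective_aeval.mp hv
  have : (MvPolynomial.aeval (R := ℚ) v) (MvPolynomial.X p) = (MvPolynomial.aeval (R := ℚ) v) 0 := by
    rw [MvPolynomial.aeval_X, map_zero, h0]
  exact MvPolynomial.X_ne_zero p (hinj this)

variable {m n : ℕ}

noncomputable def genA (v : Fin m × Fin n → ℝ) (S : Finset (Fin m × Fin n)) :
    Matrix (Fin m) (Fin n) ℝ :=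
  Matrix.of fun i j => if (i, j) ∈ S then v (i, j) else 0

lemma hasPattern_rowRestrict_genA {v : Fin m × Fin n → ℝ} (hv : AlgebraicIndependent ℚ v)
    (S : Finset (Fin m × Fin n)) (F : Finset (Fin m)) :
    HasPattern (patternOn S F) (rowRestrict (genA v S) F) := by
  intro i j
  constructor
  · intro hne
    by_cases hiF : i ∈ F
    · by_cases hS : (i, j) ∈ S
      · exact Finset.mem_filter.mpr ⟨hS, hiF⟩
      · exact absurd hne (by simp [rowRestrict, genA, hiF, hS])
    · exact absurd hne (by simp [rowRestrict, hiF])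
  · intro hmem
    obtain ⟨hS, hiF⟩ := Finset.mem_filter.mp hmem
    simpa [rowRestrict, genA, hiF, hS] using algIndep_ne_zero hv (i, j)

lemma rank_le_rank_genA {v : Fin m × Fin n → ℝ} (hv : AlgebraicIndependent ℚ v)
    (S : Finset (Fin m × Fin n)) (F : Finset (Fin m)) (B : Matrix (Fin m) (Fin n) ℝ)
    (hB : ∀ i j, B i j ≠ 0 → ((i, j) ∈ S ∧ i ∈ F)) :
    B.rank ≤ (rowRestrict (genA v S) F).rank := by
  classical
  obtain ⟨f, g, hdet⟩ := exists_det_ne_zero B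
  set P : Matrix (Fin B.rank) (Fin B.rank) (MvPolynomial (Fin m × Fin n) ℚ) :=
    Matrix.of fun k l => if (f k, g l) ∈ S ∧ f k ∈ F then MvPolynomial.X (f k, g l) else 0
    with hPdef
  have hmapdet : ∀ w : Fin m × Fin n → ℝ,
      (P.map (MvPolynomial.aeval (R := ℚ) w)).det = MvPolynomial.aeval (R := ℚ) w P.det := by
    intro w
    have h := RingHom.map_det
      (↑(MvPolynomial.aeval (R := ℚ) w) : MvPolynomial (Fin m × Fin n) ℚ →+* ℝ) P
    rw [RingHom.mapMatrix_apply] at h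
    simpa using h.symm
  have hPB : P.map (MvPolynomial.aeval (R := ℚ) (fun p => B p.1 p.2)) = B.submatrix f g := by
    ext k l
    simp only [Matrix.map_apply, hPdef, Matrix.of_apply, Matrix.submatrix_apply]
    split_ifs with hc
    · rw [MvPolynomial.aeval_X]
    · rw [map_zero]
      by_contra hne
      exact hc (hB (f k) (g l) (fun h0 => hne h0.symm))
  have hPdetne : P.det ≠ 0 := by
    intro h0
    apply hdet
    rw [← hPB, hmapdet, h0, map_zero]
  have hPA : P.map (MvPolynomial.aeval (R := ℚ) v) =
      (rowRestrict (genA v S) F).submatrix f g := by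
    ext k l
    simp only [Matrix.map_apply, hPdef, Matrix.of_apply, Matrix.submatrix_apply,
      rowRestrict, genA]
    by_cases hS : (f k, g l) ∈ S <;> by_cases hF : f k ∈ F <;>
      simp [hS, hF, MvPolynomial.aeval_X]
  have hinj := algebraicIndependent_iff_injective_aeval.mp hv
  have hdetA : ((rowRestrict (genA v S) F).submatrix f g).det ≠ 0 := by
    rw [← hPA, hmapdet]
    intro h0
    exact hPdetne (hinj (by rw [h0, map_zero]))
  exact le_rank_of_submatrix_det _ f g hdetA

lemma sprank_patternOn_eq {v : Fin m × Fin n → ℝ} (hv : AlgebraicIndependent ℚ v)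
    (S : Finset (Fin m × Fin n)) (F : Finset (Fin m)) :
    sprank (patternOn S F) = (rowRestrict (genA v S) F).rank := by
  have hmem : (rowRestrict (genA v S) F).rank ∈
      {r : ℕ | ∃ A : Matrix (Fin m) (Fin n) ℝ, HasPattern (patternOn S F) A ∧ A.rank = r} :=
    ⟨_, hasPattern_rowRestrict_genA hv S F, rfl⟩
  have hbdd : BddAbove {r : ℕ | ∃ A : Matrix (Fin m) (Fin n) ℝ,
      HasPattern (patternOn S F) A ∧ A.rank = r} := by
    refine ⟨n, ?_⟩
    rintro r ⟨B, _, rfl⟩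
    exact B.rank_le_width
  apply le_antisymm
  · apply csSup_le ⟨_, hmem⟩
    rintro r ⟨B, hBp, rfl⟩
    apply rank_le_rank_genA hv S F B
    intro i j hne
    have := (hBp i j).mp hne
    exact Finset.mem_filter.mp this
  · exact le_csSup hbdd hmem

lemma patternOn_univ (S : Finset (Fin m × Fin n)) : patternOn S Finset.univ = S := by
  simp [patternOn]

lemma rowRestrict_univ (A : Matrix (Fin m) (Fin n) ℝ) :
    rowRestrict A Finset.univ = A := by
  ext i j
  simp [rowRestrict]

lemma sprank_eq_rank_genA {v : Fin m × Fin n → ℝ} (hv : AlgebraicIndependent ℚ v)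
    (S : Finset (Fin m × Fin n)) : sprank S = (genA v S).rank := by
  have := sprank_patternOn_eq hv S Finset.univ
  rwa [patternOn_univ, rowRestrict_univ] at this

lemma rowRestrict_mulVec (A : Matrix (Fin m) (Fin n) ℝ) (T : Finset (Fin m)) (x : Fin n → ℝ) :
    (rowRestrict A T).mulVec x = fun i => if i ∈ T then A.mulVec x i else 0 := by
  funext i
  by_cases hi : i ∈ T <;>
    simp [rowRestrict, Matrix.mulVec, dotProduct, hi]

lemma hasPattern_rowRestrict {S : Finset (Fin m × Fin n)} {B : Matrix (Fin m) (Fin n) ℝ}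
    (hB : HasPattern S B) (T : Finset (Fin m)) :
    HasPattern (patternOn S T) (rowRestrict B T) := by
  intro i j
  by_cases hi : i ∈ T
  · simp only [rowRestrict, Matrix.of_apply, if_pos hi, patternOn, mem_filter]
    rw [hB i j]
    simp [hi]
  · simp [rowRestrict, hi, patternOn, Finset.mem_filter]

lemma sprank_le_of_cover (S : Finset (Fin m × Fin n)) (F : Finset (Fin m))
    (R : Finset (Fin m)) (C : Finset (Fin n))
    (hcov : ∀ i j, i ∈ F → (i, j) ∈ S → i ∈ R ∨ j ∈ C) :
    sprank (patternOn S F) ≤ R.card + C.card := by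
  classical
  have hW : HasPattern (patternOn S F)
      (Matrix.of fun i j => if (i, j) ∈ patternOn S F then (1 : ℝ) else 0) := by
    intro i j
    by_cases hm : (i, j) ∈ patternOn S F <;> simp [hm]
  have hne : {r : ℕ | ∃ A : Matrix (Fin m) (Fin n) ℝ,
      HasPattern (patternOn S F) A ∧ A.rank = r}.Nonempty := ⟨_, ⟨_, hW, rfl⟩⟩
  apply csSup_le hne
  rintro r ⟨B, hBp, rfl⟩
  apply rank_le_cover B R C
  intro i j hne
  obtain ⟨hS, hF⟩ := Finset.mem_filter.mp ((hBp i j).mp hne)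
  exact hcov i j hF hS

lemma exists_cover_of_sprank_le {v : Fin m × Fin n → ℝ} (hv : AlgebraicIndependent ℚ v)
    (S : Finset (Fin m × Fin n)) (F : Finset (Fin m)) (hn : 1 ≤ n)
    (h : sprank (patternOn S F) ≤ n - 1) :
    ∃ (R : Finset (Fin m)) (C : Finset (Fin n)),
      (∀ i j, i ∈ F → (i, j) ∈ S → i ∈ R ∨ j ∈ C) ∧ R.card + C.card ≤ n - 1 := by
  classical
  by_cases hall : ∀ J : Finset (Fin n),
      J.card ≤ (J.biUnion (fun j => F.filter (fun i => (i, j) ∈ S))).card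
  · exfalso
    obtain ⟨f, hfinj, hf⟩ := (Finset.all_card_le_biUnion_card_iff_exists_injective _).mp hall
    set B : Matrix (Fin m) (Fin n) ℝ :=
      Matrix.of fun i j => if i = f j ∧ (i, j) ∈ S ∧ i ∈ F then 1 else 0 with hBdef
    have hB : ∀ i j, B i j ≠ 0 → ((i, j) ∈ S ∧ i ∈ F) := by
      intro i j hne
      by_contra hc
      have : ¬(i = f j ∧ (i, j) ∈ S ∧ i ∈ F) := by tauto
      simp [hBdef, this] at hne
    have hsub : B.submatrix f id = (1 : Matrix (Fin n) (Fin n) ℝ) := by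
      ext k l
      by_cases hkl : k = l
      · subst hkl
        have hmem := hf k
        rw [Finset.mem_filter] at hmem
        simp [hBdef, Matrix.one_apply, hmem.1, hmem.2]
      · have : f k ≠ f l := fun hc => hkl (hfinj hc)
        simp [hBdef, Matrix.one_apply, hkl, this]
    have hdet : (B.submatrix f id).det ≠ 0 := by
      rw [hsub, Matrix.det_one]
      exact one_ne_zero
    have hrankB : n ≤ B.rank := le_rank_of_submatrix_det B f id hdet
    have hle := rank_le_rank_genA hv S F B hB
    rw [← sprank_patternOn_eq hv S F] at hle
    omega
  · push_neg at hall
    obtain ⟨J, hJ⟩ := hall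
    refine ⟨J.biUnion (fun j => F.filter (fun i => (i, j) ∈ S)), Jᶜ, ?_, ?_⟩
    · intro i j hiF hijS
      by_cases hj : j ∈ J
      · left
        exact Finset.mem_biUnion.mpr ⟨j, hj, Finset.mem_filter.mpr ⟨hiF, hijS⟩⟩
      · right
        exact Finset.mem_compl.mpr hj
    · have h1 : Jᶜ.card = n - J.card := by
        rw [Finset.card_compl, Fintype.card_fin]
      have h2 : J.card ≤ n := by
        have := Finset.card_le_univ J
        simpa using this
      omega


end Stmt15Aux

end Stmt15AuxSection

open Stmt15Aux in
/-- if `sprank S = n`, then `spcospark S` equals `m` minus the maximum, over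
all column sets `W` of size `n - 1`, of the largest cardinality of a row set `F ⊇ X_W`
with `sprank(A^S_F) ≤ n - 1`. -/
theorem stmt15 {m n : ℕ} (hn : 1 ≤ n) (hmn : n < m) (S : Finset (Fin m × Fin n))
    (hspr : sprank S = n) :
    spcospark S = m - sSup {c : ℕ | ∃ (W : Finset (Fin n)) (F : Finset (Fin m)),
      W.card = n - 1 ∧ rowsIn S W ⊆ F ∧ sprank (patternOn S F) ≤ n - 1 ∧ F.card = c} := by
  classical
  obtain ⟨v, hv⟩ := exists_algIndep m n
  set A : Matrix (Fin m) (Fin n) ℝ := genA v S with hAdef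
  have hApat : HasPattern S A := by
    have := hasPattern_rowRestrict_genA hv S Finset.univ
    rwa [patternOn_univ, rowRestrict_univ] at this
  -- the set of cardinalities of row sets with deficient generic rank
  set KS : Set ℕ :=
    {k | ∃ T : Finset (Fin m), sprank (patternOn S T) ≤ n - 1 ∧ T.card = k} with hKSdef
  have hKSne : KS.Nonempty := by
    refine ⟨0, ∅, ?_, Finset.card_empty⟩
    have h0 := sprank_le_of_cover S ∅ ∅ ∅ (fun i j hi _ => absurd hi (Finset.notMem_empty i))
    simpa using h0.trans (Nat.zero_le _)
  have hKSbdd : BddAbove KS := by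
    refine ⟨m, ?_⟩
    rintro k ⟨T, _, rfl⟩
    exact (Finset.card_le_univ T).trans (by simp)
  set K : ℕ := sSup KS with hKdef
  obtain ⟨T₀, hT₀s, hT₀c⟩ : K ∈ KS := Nat.sSup_mem hKSne hKSbdd
  have hKm : K ≤ m := by
    rw [← hT₀c]
    exact (Finset.card_le_univ T₀).trans (by simp)
  -- rank bound for pattern matrices on a row set
  have hsprank_bdd : ∀ T : Finset (Fin m), BddAbove {r : ℕ |
      ∃ B : Matrix (Fin m) (Fin n) ℝ, HasPattern (patternOn S T) B ∧ B.rank = r} := by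
    intro T
    refine ⟨n, ?_⟩
    rintro r ⟨B, _, rfl⟩
    exact B.rank_le_width
  -- Part 1a : every pattern matrix has cospark at most m - K
  have h1 : ∀ B : Matrix (Fin m) (Fin n) ℝ, HasPattern S B → cospark B ≤ m - K := by
    intro B hB
    have hle : (rowRestrict B T₀).rank ≤ sprank (patternOn S T₀) :=
      le_csSup (hsprank_bdd T₀) ⟨_, hasPattern_rowRestrict hB T₀, rfl⟩
    have hlt : (rowRestrict B T₀).rank < n := by omega
    obtain ⟨x, hx0, hxk⟩ := exists_kernel_of_rank_lt _ hlt
    have hzero : ∀ i ∈ T₀, B.mulVec x i = 0 := by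
      intro i hi
      have := congrFun hxk i
      rw [rowRestrict_mulVec] at this
      simpa [hi] using this
    have hl0 : l0 (B.mulVec x) ≤ m - K := by
      have hsub : Finset.univ.filter (fun i => B.mulVec x i ≠ 0) ⊆ T₀ᶜ := by
        intro i hi
        rw [Finset.mem_filter] at hi
        rw [Finset.mem_compl]
        intro hiT
        exact hi.2 (hzero i hiT)
      calc l0 (B.mulVec x) ≤ T₀ᶜ.card := Finset.card_le_card hsub
        _ = m - K := by rw [Finset.card_compl, Fintype.card_fin, hT₀c]
    have hmemc : l0 (B.mulVec x) ∈ {k : ℕ | ∃ y : Fin n → ℝ, y ≠ 0 ∧ l0 (B.mulVec y) = k} :=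
      ⟨x, hx0, rfl⟩
    exact (Nat.sInf_le hmemc).trans hl0
  -- Part 1b : the generic matrix has cospark at least m - K
  have h2 : m - K ≤ cospark A := by
    have hxne : (fun _ : Fin n => (1 : ℝ)) ≠ 0 := by
      intro hc
      have := congrFun hc ⟨0, hn⟩
      simpa using this
    have hcne : {k : ℕ | ∃ x : Fin n → ℝ, x ≠ 0 ∧ l0 (A.mulVec x) = k}.Nonempty :=
      ⟨l0 (A.mulVec fun _ => (1:ℝ)), ⟨(fun _ => (1:ℝ)), hxne, rfl⟩⟩
    apply le_csInf hcne
    rintro k ⟨x, hx0, rfl⟩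
    set T : Finset (Fin m) := Finset.univ.filter (fun i => A.mulVec x i = 0) with hTdef
    have hker : (rowRestrict A T).mulVec x = 0 := by
      rw [rowRestrict_mulVec]
      funext i
      by_cases hi : i ∈ T
      · have := (Finset.mem_filter.mp hi).2
        simp [hi, this]
      · simp [hi]
    have hrk : (rowRestrict A T).rank < n := rank_lt_of_kernel _ x hx0 hker
    have hsp : sprank (patternOn S T) ≤ n - 1 := by
      rw [sprank_patternOn_eq hv S T, ← hAdef]
      omega
    have hTK : T.card ≤ K := le_csSup hKSbdd ⟨T, hsp, rfl⟩
    have hcnt : l0 (A.mulVec x) + T.card = m := by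
      have hfe : Finset.univ.filter (fun i => ¬(A.mulVec x i ≠ 0)) = T := by
        ext i
        simp [hTdef, not_not]
      have := Finset.card_filter_add_card_filter_not
        (s := (Finset.univ : Finset (Fin m))) (fun i => A.mulVec x i ≠ 0)
      rw [hfe] at this
      simpa [l0] using this
    omega
  have hcosA : cospark A = m - K := le_antisymm (h1 A hApat) h2
  -- Part 1 : spcospark S = m - K
  have hspc : spcospark S = m - K := by
    apply le_antisymm
    · have hcne : {k : ℕ | ∃ B : Matrix (Fin m) (Fin n) ℝ, HasPattern S B ∧ cospark B = k}.Nonempty :=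
        ⟨cospark A, ⟨A, hApat, rfl⟩⟩
      apply csSup_le hcne
      rintro k ⟨B, hB, rfl⟩
      exact h1 B hB
    · have hbdd : BddAbove {k : ℕ | ∃ B : Matrix (Fin m) (Fin n) ℝ, HasPattern S B ∧ cospark B = k} := by
        refine ⟨m - K, ?_⟩
        rintro k ⟨B, hB, rfl⟩
        exact h1 B hB
      exact le_csSup hbdd ⟨A, hApat, hcosA⟩
  -- Part 2 : the combinatorial identification of K
  -- enough rows outside rowsIn S C
  have hrows : ∀ C : Finset (Fin n), C.card ≤ n - 1 →
      n - 1 - C.card ≤ (rowsIn S C)ᶜ.card := by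
    intro C hC
    by_contra hlt
    push_neg at hlt
    have hcov : ∀ i j, i ∈ (Finset.univ : Finset (Fin m)) → (i, j) ∈ S →
        i ∈ (rowsIn S C)ᶜ ∨ j ∈ C := by
      intro i j _ hij
      by_cases hi : i ∈ rowsIn S C
      · right
        exact (Finset.mem_filter.mp hi).2 j hij
      · left
        exact Finset.mem_compl.mpr hi
    have := sprank_le_of_cover S Finset.univ (rowsIn S C)ᶜ C hcov
    rw [patternOn_univ, hspr] at this
    omega
  -- step 16 : lower bound for K
  have step16 : ∀ C : Finset (Fin n), C.card ≤ n - 1 →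
      (rowsIn S C).card + (n - 1 - C.card) ≤ K := by
    intro C hC
    obtain ⟨R, hRsub, hRcard⟩ := Finset.exists_subset_card_eq (hrows C hC)
    have hdisj : Disjoint R (rowsIn S C) := by
      rw [Finset.disjoint_left]
      intro a haR haX
      exact (Finset.mem_compl.mp (hRsub haR)) haX
    have hcov : ∀ i j, i ∈ R ∪ rowsIn S C → (i, j) ∈ S → i ∈ R ∨ j ∈ C := by
      intro i j hi hij
      rcases Finset.mem_union.mp hi with hi | hi
      · left; exact hi
      · right; exact (Finset.mem_filter.mp hi).2 j hij
    have hsp := sprank_le_of_cover S (R ∪ rowsIn S C) R C hcov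
    have hsp' : sprank (patternOn S (R ∪ rowsIn S C)) ≤ n - 1 := by omega
    have hmem : (R ∪ rowsIn S C).card ∈ KS := ⟨_, hsp', rfl⟩
    have hcard : (R ∪ rowsIn S C).card = (n - 1 - C.card) + (rowsIn S C).card := by
      rw [Finset.card_union_of_disjoint hdisj, hRcard]
    have := le_csSup hKSbdd hmem
    omega
  -- step 17 : upper bound for K, via Hall covers
  obtain ⟨R₀, C₀, hcov₀, hsize₀⟩ := exists_cover_of_sprank_le hv S T₀ hn hT₀s
  have hC₀ : C₀.card ≤ n - 1 := by omega
  have step17 : K ≤ (rowsIn S C₀).card + (n - 1 - C₀.card) := by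
    have hsub : T₀ ⊆ R₀ ∪ rowsIn S C₀ := by
      intro i hi
      by_cases hiR : i ∈ R₀
      · exact Finset.mem_union_left _ hiR
      · refine Finset.mem_union_right _ (Finset.mem_filter.mpr ⟨Finset.mem_univ i, ?_⟩)
        intro j hij
        rcases hcov₀ i j hi hij with h | h
        · exact absurd h hiR
        · exact h
    calc K = T₀.card := hT₀c.symm
      _ ≤ (R₀ ∪ rowsIn S C₀).card := Finset.card_le_card hsub
      _ ≤ R₀.card + (rowsIn S C₀).card := Finset.card_union_le _ _
      _ ≤ (rowsIn S C₀).card + (n - 1 - C₀.card) := by omega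
  have hKeq : K = (rowsIn S C₀).card + (n - 1 - C₀.card) :=
    le_antisymm step17 (step16 C₀ hC₀)
  -- step 18 : K is attained in the W-constrained family
  set MS : Set ℕ := {c : ℕ | ∃ (W : Finset (Fin n)) (F : Finset (Fin m)),
      W.card = n - 1 ∧ rowsIn S W ⊆ F ∧ sprank (patternOn S F) ≤ n - 1 ∧ F.card = c}
    with hMSdef
  have step18 : K ∈ MS := by
    -- choose a column w outside C₀
    obtain ⟨w, hw⟩ : ∃ w : Fin n, w ∉ C₀ := by
      by_contra hc
      push_neg at hc
      have : C₀ = Finset.univ := Finset.eq_univ_iff_forall.mpr hc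
      rw [this] at hC₀
      simp at hC₀
      omega
    set W : Finset (Fin n) := ({w} : Finset (Fin n))ᶜ with hWdef
    have hWcard : W.card = n - 1 := by
      rw [hWdef, Finset.card_compl, Finset.card_singleton, Fintype.card_fin]
    have hCW : C₀ ⊆ W := by
      intro c hc
      rw [hWdef, Finset.mem_compl, Finset.mem_singleton]
      intro hcw
      exact hw (hcw ▸ hc)
    have hXmono : rowsIn S C₀ ⊆ rowsIn S W := by
      intro i hi
      simp only [rowsIn, Finset.mem_filter] at hi ⊢
      exact ⟨hi.1, fun j hj => hCW (hi.2 j hj)⟩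
    have hXWK : (rowsIn S W).card ≤ K := by
      have := step16 W (le_of_eq hWcard)
      omega
    have hsd : (rowsIn S W \ rowsIn S C₀).card ≤ n - 1 - C₀.card := by
      rw [Finset.card_sdiff_of_subset hXmono]
      omega
    have hsd2 : rowsIn S W \ rowsIn S C₀ ⊆ (rowsIn S C₀)ᶜ := by
      intro i hi
      rw [Finset.mem_sdiff] at hi
      exact Finset.mem_compl.mpr hi.2
    obtain ⟨R, hRs, hRsub, hRcard⟩ :=
      Finset.exists_subsuperset_card_eq hsd2 hsd (hrows C₀ hC₀)
    have hdisj : Disjoint R (rowsIn S C₀) := by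
      rw [Finset.disjoint_left]
      intro a haR haX
      exact (Finset.mem_compl.mp (hRsub haR)) haX
    refine ⟨W, R ∪ rowsIn S C₀, hWcard, ?_, ?_, ?_⟩
    · -- rowsIn S W ⊆ R ∪ rowsIn S C₀
      intro i hi
      by_cases hiC : i ∈ rowsIn S C₀
      · exact Finset.mem_union_right _ hiC
      · exact Finset.mem_union_left _ (hRs (Finset.mem_sdiff.mpr ⟨hi, hiC⟩))
    · -- deficient generic rank via the cover (R, C₀)
      have hcov : ∀ i j, i ∈ R ∪ rowsIn S C₀ → (i, j) ∈ S → i ∈ R ∨ j ∈ C₀ := by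
        intro i j hi hij
        rcases Finset.mem_union.mp hi with hi | hi
        · left; exact hi
        · right; exact (Finset.mem_filter.mp hi).2 j hij
      have := sprank_le_of_cover S (R ∪ rowsIn S C₀) R C₀ hcov
      omega
    · rw [Finset.card_union_of_disjoint hdisj, hRcard]
      omega
  -- step 19 : the suprema agree
  have hMSle : ∀ c ∈ MS, c ≤ K := by
    rintro c ⟨W, F, _, _, hsp, rfl⟩
    exact le_csSup hKSbdd ⟨F, hsp, rfl⟩
  have step19 : sSup MS = K :=
    le_antisymm (csSup_le ⟨K, step18⟩ hMSle)
      (le_csSup ⟨K, hMSle⟩ step18)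
  rw [hspc, step19]
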